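/- (Proposition 1: RLOO update with rejection sampling.) Let Z be a finite type, Θ = ℝ^d a parameter space, and π₀ : Θ → Z → ℝ a parameterized family of probability mass functions. Fix θ₀ ∈ Θ and a subset S ⊆ Z such that π₀(θ₀, S) := Σ_{z ∈ S} π₀(θ₀, z) > 0, and such that for each z ∈ S the map θ ↦ π₀(θ, z) is differentiable at θ₀ with π₀(θ₀, z) > 0. Define the rejection-sampled family π(θ, z) = π₀(θ, z) · 1_{z ∈ S} / π₀(θ, S). Let R : Z → ℝ be a reward function, let g ≥ 2, and let z₁, …, z_g ∈ S. Define the RLOO advantages A(zᵢ) = R(zᵢ) − (1/(g−1)) Σ_{j ≠ i} R(z_j). Then Σ_{i=1}^{g} A(zᵢ) • ∇_θ ln π(θ₀, zᵢ) = Σ_{i=1}^{g} A(zᵢ) • ∇_θ ln π₀(θ₀, zᵢ), where ∇_θ denotes the gradient with respect to θ ∈ ℝ^d. In other words, the RLOO policy-gradient update for the rejection-sampled distribution π can be computed using gradients of the proposal distribution π₀ only. -/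

import Mathlib

/-!
On `S` the rejection-sampled log-density is `log π₀(θ, z) - log π₀(θ, S)`, so the two score
functions differ by the gradient of `log π₀(θ, S)`, which does not depend on the sample.
RLOO advantages sum to zero, so this common shift cancels from the update.
-/

open Finset

noncomputable def rlooAdvantage {ι K : Type*} [Fintype ι] [DecidableEq ι] [Field K]
    (r : ι → K) (i : ι) : K :=
  r i - (1 / ((Fintype.card ι : K) - 1)) * ∑ j ∈ univ.filter (fun j => j ≠ i), r j

theorem sum_rlooAdvantage_eq_zero {ι K : Type*} [Fintype ι] [DecidableEq ι] [Field K]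
    (r : ι → K) (hcard : (Fintype.card ι : K) ≠ 1) :
    ∑ i, rlooAdvantage r i = 0 := by
  have hsub : (Fintype.card ι : K) - 1 ≠ 0 := sub_ne_zero.mpr hcard
  have hothers : ∀ i, ∑ j ∈ univ.filter (fun j => j ≠ i), r j = ∑ j, r j - r i := fun i => by
    rw [filter_ne', sum_erase_eq_sub (mem_univ i)]
  simp only [rlooAdvantage, hothers, sum_sub_distrib, ← mul_sum, sum_const, card_univ,
    nsmul_eq_mul]
  field_simp
  ring

theorem sum_smul_sub_const_of_sum_eq_zero {ι R M : Type*} [Fintype ι] [Ring R]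
    [AddCommGroup M] [Module R M] (a : ι → R) (v : ι → M) (c : M) (ha : ∑ i, a i = 0) :
    ∑ i, a i • (v i - c) = ∑ i, a i • v i := by
  simp only [smul_sub, sum_sub_distrib, ← sum_smul, ha, zero_smul, sub_zero]

theorem fderiv_log_div {E : Type*} [NormedAddCommGroup E] [NormedSpace ℝ E] {f F : E → ℝ}
    {x : E} (hf : DifferentiableAt ℝ f x) (hF : DifferentiableAt ℝ F x) (hfx : f x ≠ 0)
    (hFx : F x ≠ 0) :
    fderiv ℝ (fun y => Real.log (f y / F y)) x =
      fderiv ℝ (fun y => Real.log (f y)) x - fderiv ℝ (fun y => Real.log (F y)) x := by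
  have hlog_div : (fun y => Real.log (f y / F y)) =ᶠ[nhds x]
      fun y => Real.log (f y) - Real.log (F y) := by
    filter_upwards [hf.continuousAt.eventually_ne hfx, hF.continuousAt.eventually_ne hFx]
      with y hfy hFy
    exact Real.log_div hfy hFy
  rw [hlog_div.fderiv_eq]
  exact fderiv_fun_sub (hf.log hfx) (hF.log hFx)

theorem rloo_update_rejection_sampling_general {Z : Type*} [Fintype Z] [DecidableEq Z] {d : ℕ}
    (π₀ : (Fin d → ℝ) → Z → ℝ)
    (θ₀ : Fin d → ℝ) (S : Finset Z)
    (hSpos : 0 < ∑ z ∈ S, π₀ θ₀ z)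
    (hdiff : ∀ z ∈ S, DifferentiableAt ℝ (fun θ => π₀ θ z) θ₀)
    (hpos : ∀ z ∈ S, 0 < π₀ θ₀ z)
    (π : (Fin d → ℝ) → Z → ℝ)
    (hπ : ∀ θ w, π θ w = π₀ θ w * (if w ∈ S then (1 : ℝ) else 0) / ∑ u ∈ S, π₀ θ u)
    (R : Z → ℝ) (g : ℕ) (hg : 2 ≤ g)
    (z : Fin g → Z) (hzS : ∀ i, z i ∈ S)
    (A : Fin g → ℝ)
    (hA : ∀ i, A i = R (z i) -
      (1 / ((g : ℝ) - 1)) * ∑ j ∈ Finset.univ.filter (fun j => j ≠ i), R (z j)) :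
    ∑ i, A i • fderiv ℝ (fun θ => Real.log (π θ (z i))) θ₀ =
      ∑ i, A i • fderiv ℝ (fun θ => Real.log (π₀ θ (z i))) θ₀ := by
  set F : (Fin d → ℝ) → ℝ := fun θ => ∑ u ∈ S, π₀ θ u
  have hF : DifferentiableAt ℝ F θ₀ := DifferentiableAt.fun_sum hdiff
  have hscore : ∀ i, fderiv ℝ (fun θ => Real.log (π θ (z i))) θ₀ =
      fderiv ℝ (fun θ => Real.log (π₀ θ (z i))) θ₀ - fderiv ℝ (fun θ => Real.log (F θ)) θ₀ := by
    intro i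
    have hπz : ∀ θ, π θ (z i) = π₀ θ (z i) / F θ := fun θ => by
      rw [hπ, if_pos (hzS i), mul_one]
    simp only [hπz]
    exact fderiv_log_div (hdiff _ (hzS i)) hF (hpos _ (hzS i)).ne' hSpos.ne'
  have hA_sum : ∑ i, A i = 0 := by
    have hcard : (Fintype.card (Fin g) : ℝ) ≠ 1 := by
      rw [Fintype.card_fin]
      exact_mod_cast (by omega : g ≠ 1)
    rw [← sum_rlooAdvantage_eq_zero (R ∘ z) hcard]
    refine sum_congr rfl fun i _ => ?_
    rw [hA, rlooAdvantage, Fintype.card_fin]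
    rfl
  simp only [hscore]
  exact sum_smul_sub_const_of_sum_eq_zero A _ _ hA_sum

/-- Proposition 1 (RLOO update with rejection sampling): the advantage-weighted
sum of log-density gradients of the rejection-sampled distribution `π` equals
the corresponding sum for the proposal distribution `π₀`. -/
theorem rloo_update_rejection_sampling {Z : Type*} [Fintype Z] [DecidableEq Z] {d : ℕ}
    (π₀ : (Fin d → ℝ) → Z → ℝ)
    (hpmf : ∀ θ, (∀ z, 0 ≤ π₀ θ z) ∧ ∑ z, π₀ θ z = 1)
    (θ₀ : Fin d → ℝ) (S : Finset Z)
    (hSpos : 0 < ∑ z ∈ S, π₀ θ₀ z)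
    (hdiff : ∀ z ∈ S, DifferentiableAt ℝ (fun θ => π₀ θ z) θ₀)
    (hpos : ∀ z ∈ S, 0 < π₀ θ₀ z)
    (π : (Fin d → ℝ) → Z → ℝ)
    (hπ : ∀ θ w, π θ w = π₀ θ w * (if w ∈ S then (1 : ℝ) else 0) / ∑ u ∈ S, π₀ θ u)
    (R : Z → ℝ) (g : ℕ) (hg : 2 ≤ g)
    (z : Fin g → Z) (hzS : ∀ i, z i ∈ S)
    (A : Fin g → ℝ)
    (hA : ∀ i, A i = R (z i) -
      (1 / ((g : ℝ) - 1)) * ∑ j ∈ Finset.univ.filter (fun j => j ≠ i), R (z j)) :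
    ∑ i, A i • fderiv ℝ (fun θ => Real.log (π θ (z i))) θ₀ =
      ∑ i, A i • fderiv ℝ (fun θ => Real.log (π₀ θ (z i))) θ₀ :=
  rloo_update_rejection_sampling_general π₀ θ₀ S hSpos hdiff hpos π hπ R g hg z hzS A hA
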